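/- arXiv:1611.00524 — 6 statements merged into one kernel-verified Lean document; each statement's English description precedes it below -/
import Mathlib

section
/- The core satisfies Monotonicity condition 1: if a is in the core of X under profile P⃗, and P⃗' is obtained from P⃗ by improving the position of a (preserving the relative order of all other pairs and never demoting a relative to any alternative), then a is in the core of X under P⃗'. -/
open scoped Classical

/-- The majority relation of a profile. -/
def maj {A : Type*} {n : ℕ} (P : Fin n → A → A → Prop) (x y : A) : Prop :=
  (Finset.univ.filter fun i : Fin n => P i x y).card >
    (Finset.univ.filter fun i : Fin n => P i y x).card

/-- The core satisfies Monotonicity condition 1: improving the position of a core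
alternative keeps it in the core. -/
theorem core_monotonicity1 {A : Type*} [Fintype A] {n : ℕ}
    (P P' : Fin n → A → A → Prop)
    (hP : ∀ i, IsStrictTotalOrder A (P i))
    (hP' : ∀ i, IsStrictTotalOrder A (P' i))
    (a : A)
    (himp₁ : ∀ i, ∀ b c : A, b ≠ a → c ≠ a → (P i b c ↔ P' i b c))
    (himp₂ : ∀ i, ∀ y : A, P i a y → P' i a y)
    (hcore : ∀ x : A, ¬ maj P x a) :
    ∀ x : A, ¬ maj P' x a := by
  intro x hmaj
  by_cases hxa : x = a
  · subst hxa
    exact lt_irrefl _ hmaj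
  · apply hcore x
    have h1 : (Finset.univ.filter fun i : Fin n => P' i x a).card ≤
        (Finset.univ.filter fun i : Fin n => P i x a).card := by
      apply Finset.card_le_card
      intro i hi
      simp only [Finset.mem_filter, Finset.mem_univ, true_and] at hi ⊢
      rcases (haveI := hP i; trichotomous_of (P i) x a) with h | h | h
      · exact h
      · exact absurd h hxa
      · exact absurd (himp₂ i x h) ((hP' i).irrefl x ∘ (hP' i).trans _ _ _ hi)
    have h2 : (Finset.univ.filter fun i : Fin n => P i a x).card ≤
        (Finset.univ.filter fun i : Fin n => P' i a x).card := by
      apply Finset.card_le_card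
      intro i hi
      simp only [Finset.mem_filter, Finset.mem_univ, true_and] at hi ⊢
      exact himp₂ i x hi
    exact lt_of_le_of_lt h2 (lt_of_lt_of_le hmaj h1)
end

section
/- The minimal dominant set rule satisfies the Concordance condition: if x is chosen (belongs to the union of minimal dominant sets) from both X' and X'', then x is chosen from X' ∪ X''. -/
open scoped Classical

/-- `Q` is a dominant set in `X`: every element of `Q` dominates every element of
`X \ Q` via `μ`. -/
def dominant {A : Type*} (μ : A → A → Prop) (X Q : Finset A) : Prop :=
  Q ⊆ X ∧ ∀ x ∈ Q, ∀ y ∈ X, y ∉ Q → μ x y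

/-- `Q` is a minimal dominant set in `X`. -/
def minimalDominant {A : Type*} (μ : A → A → Prop) (X Q : Finset A) : Prop :=
  Q.Nonempty ∧ dominant μ X Q ∧
    ∀ Q' ⊆ Q, Q' ≠ Q → Q'.Nonempty → ¬ dominant μ X Q'

/-- `x` is chosen from `X` by the minimal dominant set rule (union of all
minimal dominant sets). -/
def mdsChosen {A : Type*} (μ : A → A → Prop) (X : Finset A) (x : A) : Prop :=
  ∃ Q, minimalDominant μ X Q ∧ x ∈ Q

/-- The majority relation is asymmetric. -/
lemma maj_asymm {A : Type*} {n : ℕ} (P : Fin n → A → A → Prop) {a b : A}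
    (h : maj P a b) : ¬ maj P b a := by
  unfold maj at *; omega

/-- Two dominant sets in the same `X` are comparable under asymmetry of `μ`. -/
lemma dominant_comparable {A : Type*} {μ : A → A → Prop} {X Q₁ Q₂ : Finset A}
    (hA : ∀ a b, μ a b → ¬ μ b a)
    (h₁ : dominant μ X Q₁) (h₂ : dominant μ X Q₂) : Q₁ ⊆ Q₂ ∨ Q₂ ⊆ Q₁ := by
  by_contra h
  push_neg at h
  obtain ⟨h12, h21⟩ := h
  obtain ⟨a, ha1, ha2⟩ := Finset.not_subset.mp h12
  obtain ⟨b, hb2, hb1⟩ := Finset.not_subset.mp h21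
  exact hA a b (h₁.2 a ha1 b (h₂.1 hb2) hb1) (h₂.2 b hb2 a (h₁.1 ha1) ha2)

/-- A nonempty set has a minimal dominant subset. -/
lemma exists_minimalDominant {A : Type*} (μ : A → A → Prop) (X : Finset A)
    (hX : X.Nonempty) : ∃ Q, minimalDominant μ X Q := by
  classical
  set S : Finset (Finset A) :=
    X.powerset.filter (fun Q => Q.Nonempty ∧ dominant μ X Q) with hS
  have hXS : X ∈ S := by
    simp only [hS, Finset.mem_filter, Finset.mem_powerset]
    exact ⟨subset_rfl, hX, subset_rfl, fun a ha y hy hny => absurd hy hny⟩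
  obtain ⟨Q, hQS, hmin⟩ := S.exists_min_image Finset.card ⟨X, hXS⟩
  simp only [hS, Finset.mem_filter, Finset.mem_powerset] at hQS
  refine ⟨Q, hQS.2.1, hQS.2.2, ?_⟩
  intro Q' hsub hne hne' hdom
  have hQ'S : Q' ∈ S := by
    simp only [hS, Finset.mem_filter, Finset.mem_powerset]
    exact ⟨hdom.1, hne', hdom⟩
  have := hmin Q' hQ'S
  have hlt : Q'.card < Q.card := Finset.card_lt_card (ssubset_of_subset_of_ne hsub hne)
  omega

/-- Restriction of a dominant set of `X' ∪ X''` to `X'` is dominant in `X'`. -/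
lemma dominant_inter {A : Type*} {μ : A → A → Prop} {X' X'' D : Finset A}
    (hD : dominant μ (X' ∪ X'') D) : dominant μ X' (D ∩ X') := by
  classical
  refine ⟨Finset.inter_subset_right, ?_⟩
  intro a ha y hy hny
  have haD : a ∈ D := (Finset.mem_inter.mp ha).1
  have hyD : y ∉ D := fun hyD => hny (Finset.mem_inter.mpr ⟨hyD, hy⟩)
  exact hD.2 a haD y (Finset.mem_union_left _ hy) hyD

/-- Key step: if `x` is chosen from `X'` and `D` is a minimal dominant set of
`X' ∪ X''` meeting `X'`, then `x ∈ D`. -/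
lemma mem_of_inter_nonempty {A : Type*} {μ : A → A → Prop}
    (hA : ∀ a b, μ a b → ¬ μ b a) {X' X'' D : Finset A} {x : A}
    (h' : mdsChosen μ X' x) (hD : minimalDominant μ (X' ∪ X'') D)
    (hne : (D ∩ X').Nonempty) : x ∈ D := by
  classical
  obtain ⟨Q, ⟨hQne, hQdom, hQmin⟩, hxQ⟩ := h'
  have hdom' : dominant μ X' (D ∩ X') := dominant_inter hD.2.1
  rcases dominant_comparable hA hQdom hdom' with h | h
  · exact Finset.mem_inter.mp (h hxQ) |>.1
  · by_cases heq : D ∩ X' = Q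
    · exact Finset.mem_inter.mp (heq ▸ hxQ) |>.1
    · exact absurd hdom' (hQmin _ h heq hne)

/-- The minimal dominant set rule satisfies the Concordance condition. -/
theorem minimal_dominant_concordance {A : Type*} {n : ℕ}
    (P : Fin n → A → A → Prop)
    (hP : ∀ i, IsStrictTotalOrder A (P i))
    (X' X'' : Finset A) (x : A)
    (h' : mdsChosen (maj P) X' x) (h'' : mdsChosen (maj P) X'' x) :
    mdsChosen (maj P) (X' ∪ X'') x := by
  classical
  have hA : ∀ a b, maj P a b → ¬ maj P b a := fun a b => maj_asymm P
  have hxX' : x ∈ X' := by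
    obtain ⟨Q, hQ, hx⟩ := h'
    exact hQ.2.1.1 hx
  obtain ⟨D, hD⟩ := exists_minimalDominant (maj P) (X' ∪ X'')
    ⟨x, Finset.mem_union_left _ hxX'⟩
  refine ⟨D, hD, ?_⟩
  obtain ⟨d, hd⟩ := hD.1
  rcases Finset.mem_union.mp (hD.2.1.1 hd) with hd' | hd''
  · exact mem_of_inter_nonempty hA h' hD ⟨d, Finset.mem_inter.mpr ⟨hd, hd'⟩⟩
  · have hD' : minimalDominant (maj P) (X'' ∪ X') D := by
      rwa [Finset.union_comm]
    exact mem_of_inter_nonempty hA h'' hD' ⟨d, Finset.mem_inter.mpr ⟨hd, hd''⟩⟩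
end

section
/- In any finite set X with a complete asymmetric majority tournament, the minimal dominant set is unique, so the choice of the minimal dominant set rule is well-defined as a single set. -/
open scoped Classical

/-- For a tournament, the minimal dominant set is unique. -/
theorem minimal_dominant_unique {A : Type*} (μ : A → A → Prop)
    (X : Finset A) (hX : X.Nonempty)
    (htour : ∀ x ∈ X, ∀ y ∈ X, x ≠ y → Xor' (μ x y) (μ y x))
    (Q₁ Q₂ : Finset A)
    (h₁ : minimalDominant μ X Q₁) (h₂ : minimalDominant μ X Q₂) :
    Q₁ = Q₂ := by
  obtain ⟨hne₁, hd₁, hmin₁⟩ := h₁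
  obtain ⟨hne₂, hd₂, hmin₂⟩ := h₂
  -- intersection is nonempty
  have hInt : (Q₁ ∩ Q₂).Nonempty := by
    by_contra h
    rw [Finset.not_nonempty_iff_eq_empty] at h
    obtain ⟨x, hx⟩ := hne₁
    obtain ⟨y, hy⟩ := hne₂
    have hxQ2 : x ∉ Q₂ := fun hx2 => by
      have : x ∈ Q₁ ∩ Q₂ := Finset.mem_inter.mpr ⟨hx, hx2⟩
      simp [h] at this
    have hyQ1 : y ∉ Q₁ := fun hy1 => by
      have : y ∈ Q₁ ∩ Q₂ := Finset.mem_inter.mpr ⟨hy1, hy⟩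
      simp [h] at this
    have hxy : x ≠ y := fun hxy => hxQ2 (hxy ▸ hy)
    have h1 : μ x y := hd₁.2 x hx y (hd₂.1 hy) hyQ1
    have h2 : μ y x := hd₂.2 y hy x (hd₁.1 hx) hxQ2
    exact (htour x (hd₁.1 hx) y (hd₂.1 hy) hxy).elim
      (fun ⟨_, h⟩ => h h2) (fun ⟨_, h⟩ => h h1)
  -- intersection is dominant
  have hdInt : dominant μ X (Q₁ ∩ Q₂) := by
    refine ⟨fun z hz => hd₁.1 (Finset.mem_inter.mp hz).1, ?_⟩
    intro x hx y hy hyn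
    obtain ⟨hx1, hx2⟩ := Finset.mem_inter.mp hx
    rcases em (y ∈ Q₁) with hy1 | hy1
    · have hy2 : y ∉ Q₂ := fun hy2 => hyn (Finset.mem_inter.mpr ⟨hy1, hy2⟩)
      exact hd₂.2 x hx2 y hy hy2
    · exact hd₁.2 x hx1 y hy hy1
  have e1 : Q₁ ∩ Q₂ = Q₁ := by
    by_contra hne
    exact hmin₁ (Q₁ ∩ Q₂) Finset.inter_subset_left hne hInt hdInt
  have e2 : Q₁ ∩ Q₂ = Q₂ := by
    by_contra hne
    exact hmin₂ (Q₁ ∩ Q₂) Finset.inter_subset_right hne hInt hdInt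
  rw [← e1, e2]
end

section
/- The Fishburn rule satisfies Monotonicity condition 1: if a is chosen from X under profile P⃗ (no y has upper contour set strictly contained in that of a), and P⃗' improves the position of a while keeping the relative order of all other pairs unchanged, then a is chosen under P⃗'. -/
open scoped Classical

/-- The upper contour set of `x` under the majority relation of the profile. -/
noncomputable def upSet {A : Type*} [Fintype A] {n : ℕ}
    (P : Fin n → A → A → Prop) (x : A) : Finset A :=
  Finset.univ.filter fun y => maj P y x

/-- The Fishburn rule satisfies Monotonicity condition 1. -/
theorem fishburn_monotonicity1 {A : Type*} [Fintype A] {n : ℕ}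
    (P P' : Fin n → A → A → Prop)
    (hP : ∀ i, IsStrictTotalOrder A (P i))
    (hP' : ∀ i, IsStrictTotalOrder A (P' i))
    (a : A)
    (himp₁ : ∀ i, ∀ b c : A, b ≠ a → c ≠ a → (P i b c ↔ P' i b c))
    (himp₂ : ∀ i, ∀ y : A, P i a y → P' i a y)
    (hch : ∀ y : A, ¬ upSet P y ⊂ upSet P a) :
    ∀ y : A, ¬ upSet P' y ⊂ upSet P' a := by
  -- if a voter prefers w to a in P', she did so in P
  have hPa : ∀ i (w : A), P' i w a → P i w a := by
    intro i w hw
    rcases (show P i w a ∨ w = a ∨ P i a w from (em (P i w a)).elim Or.inl fun h1 => (em (P i a w)).elim (fun h2 => Or.inr (Or.inr h2)) fun h2 => Or.inr (Or.inl ((hP i).trichotomous w a h1 h2))) with h | rfl | h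
    · exact h
    · exact absurd hw ((hP' i).irrefl w)
    · exact absurd ((hP' i).trans _ _ _ hw (himp₂ i w h)) ((hP' i).irrefl w)
  -- majority vs a only gets harder
  have hmaj1 : ∀ z : A, maj P' z a → maj P z a := by
    intro z hz
    unfold maj at hz ⊢
    have s1 : (Finset.univ.filter fun i : Fin n => P' i z a) ⊆
        Finset.univ.filter fun i : Fin n => P i z a := by
      intro i hi
      simp only [Finset.mem_filter, Finset.mem_univ, true_and] at hi ⊢
      exact hPa i z hi
    have s2 : (Finset.univ.filter fun i : Fin n => P i a z) ⊆
        Finset.univ.filter fun i : Fin n => P' i a z := by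
      intro i hi
      simp only [Finset.mem_filter, Finset.mem_univ, true_and] at hi ⊢
      exact himp₂ i z hi
    exact lt_of_le_of_lt (Finset.card_le_card s2)
      (lt_of_lt_of_le hz (Finset.card_le_card s1))
  have key1 : upSet P' a ⊆ upSet P a := by
    intro z hz
    simp only [upSet, Finset.mem_filter, Finset.mem_univ, true_and] at hz ⊢
    exact hmaj1 z hz
  -- majority over y ≠ a only gets easier
  have hmaj2 : ∀ y z : A, y ≠ a → maj P z y → maj P' z y := by
    intro y z hy hz
    by_cases hza : z = a
    · subst hza
      unfold maj at hz ⊢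
      have s1 : (Finset.univ.filter fun i : Fin n => P i z y) ⊆
          Finset.univ.filter fun i : Fin n => P' i z y := by
        intro i hi
        simp only [Finset.mem_filter, Finset.mem_univ, true_and] at hi ⊢
        exact himp₂ i y hi
      have s2 : (Finset.univ.filter fun i : Fin n => P' i y z) ⊆
          Finset.univ.filter fun i : Fin n => P i y z := by
        intro i hi
        simp only [Finset.mem_filter, Finset.mem_univ, true_and] at hi ⊢
        exact hPa i y hi
      exact lt_of_le_of_lt (Finset.card_le_card s2)
        (lt_of_lt_of_le hz (Finset.card_le_card s1))
    · unfold maj at hz ⊢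
      have e1 : (Finset.univ.filter fun i : Fin n => P i z y) =
          Finset.univ.filter fun i : Fin n => P' i z y := by
        apply Finset.filter_congr
        intro i _
        exact (by simpa using himp₁ i z y hza hy)
      have e2 : (Finset.univ.filter fun i : Fin n => P i y z) =
          Finset.univ.filter fun i : Fin n => P' i y z := by
        apply Finset.filter_congr
        intro i _
        exact (by simpa using himp₁ i y z hy hza)
      rw [← e1, ← e2]
      exact hz
  intro y hcon
  by_cases hy : y = a
  · subst hy; exact ssubset_irrefl _ hcon
  · have key2 : upSet P y ⊆ upSet P' y := by
      intro z hz
      simp only [upSet, Finset.mem_filter, Finset.mem_univ, true_and] at hz ⊢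
      exact hmaj2 y z hy hz
    have hsub : upSet P y ⊆ upSet P a := (key2.trans hcon.subset).trans key1
    have hne : upSet P y ≠ upSet P a := by
      intro heq
      exact hcon.2 ((key1.trans (heq ▸ le_refl _)).trans key2)
    exact hch y (ssubset_iff_subset_ne.mpr ⟨hsub, hne⟩)
end

section
/- Uncovered set II satisfies the Concordance condition: if x is B-undominated both in X' and in X'' (with respect to the majority relation restricted to those sets), then x is B-undominated in X' ∪ X''. -/
open scoped Classical

/-- The upper contour set of `x` within `Y`. -/
noncomputable def upSetIn {A : Type*} {n : ℕ} (P : Fin n → A → A → Prop)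
    (Y : Finset A) (x : A) : Finset A :=
  Y.filter fun y => maj P y x

/-- `x` B-dominates `y` in `Y`. -/
def Bdom {A : Type*} {n : ℕ} (P : Fin n → A → A → Prop)
    (Y : Finset A) (x y : A) : Prop :=
  maj P x y ∧ upSetIn P Y x ⊂ upSetIn P Y y

lemma maj_irrefl {A : Type*} {n : ℕ} (P : Fin n → A → A → Prop) (x : A) :
    ¬ maj P x x := lt_irrefl _

lemma aux_contra {A : Type*} {n : ℕ} (P : Fin n → A → A → Prop)
    (X Y : Finset A) (a x : A) (hax : a ∈ X)
    (hund : ¬ ∃ z ∈ X, Bdom P X z a)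
    (hx : x ∈ X) (hsub : X ⊆ Y)
    (hB : Bdom P Y x a) : False := by
  obtain ⟨hmaj, hss⟩ := hB
  have hsubU : upSetIn P X x ⊆ upSetIn P X a := by
    intro y hy
    simp only [upSetIn, Finset.mem_filter] at hy ⊢
    have : y ∈ upSetIn P Y a := hss.1 (by
      simp only [upSetIn, Finset.mem_filter]; exact ⟨hsub hy.1, hy.2⟩)
    simp only [upSetIn, Finset.mem_filter] at this
    exact ⟨hy.1, this.2⟩
  have heq : upSetIn P X x = upSetIn P X a := by
    by_contra hne
    exact hund ⟨x, hx, hmaj, ⟨hsubU, fun h => hne (le_antisymm hsubU h)⟩⟩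
  have hxa : x ∈ upSetIn P X a := by
    simp only [upSetIn, Finset.mem_filter]; exact ⟨hx, hmaj⟩
  rw [← heq] at hxa
  simp only [upSetIn, Finset.mem_filter] at hxa
  exact maj_irrefl P x hxa.2

/-- Uncovered set II satisfies the Concordance condition. -/
theorem uncoveredII_concordance {A : Type*} {n : ℕ}
    (P : Fin n → A → A → Prop)
    (hP : ∀ i, IsStrictTotalOrder A (P i))
    (X' X'' : Finset A) (a : A)
    (h' : a ∈ X' ∧ ¬ ∃ x ∈ X', Bdom P X' x a)
    (h'' : a ∈ X'' ∧ ¬ ∃ x ∈ X'', Bdom P X'' x a) :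
    a ∈ X' ∪ X'' ∧ ¬ ∃ x ∈ X' ∪ X'', Bdom P (X' ∪ X'') x a := by
  refine ⟨Finset.mem_union_left _ h'.1, ?_⟩
  rintro ⟨x, hx, hB⟩
  rcases Finset.mem_union.mp hx with hx' | hx''
  · exact aux_contra P X' (X' ∪ X'') a x h'.1 h'.2 hx' Finset.subset_union_left hB
  · exact aux_contra P X'' (X' ∪ X'') a x h''.1 h''.2 hx'' Finset.subset_union_right hB
end

section
/- The minimax procedure satisfies Monotonicity condition 1: if a ∈ argmin_{x∈X} max_{b∈X, b≠x} n(b, x) under profile P⃗, and P⃗' improves the position of a while preserving the relative order of all other pairs, then a ∈ argmin_{x∈X} max_{b∈X, b≠x} n(b, x) under P⃗'. -/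
open scoped Classical

/-- `nrel P a b` = number of criteria preferring `a` to `b`. -/
noncomputable def nrel {A : Type*} {n : ℕ} (P : Fin n → A → A → Prop)
    (a b : A) : ℕ :=
  (Finset.univ.filter fun i : Fin n => P i a b).card

/-- The worst pairwise opposition against `x`: `max_{b ≠ x} n(b, x)`. -/
noncomputable def worst {A : Type*} [Fintype A] [DecidableEq A] {n : ℕ}
    (P : Fin n → A → A → Prop) (x : A) : ℕ :=
  (Finset.univ.erase x).sup fun b => nrel P b x

/-- The minimax procedure satisfies Monotonicity condition 1. -/
theorem minimax_monotonicity1 {A : Type*} [Fintype A] [DecidableEq A] {n : ℕ}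
    (P P' : Fin n → A → A → Prop)
    (hcard : 2 ≤ Fintype.card A)
    (hP : ∀ i, IsStrictTotalOrder A (P i))
    (hP' : ∀ i, IsStrictTotalOrder A (P' i))
    (a : A)
    (himp₁ : ∀ i, ∀ b c : A, b ≠ a → c ≠ a → (P i b c ↔ P' i b c))
    (himp₂ : ∀ i, ∀ y : A, P i a y → P' i a y)
    (hch : ∀ x : A, worst P a ≤ worst P x) :
    ∀ x : A, worst P' a ≤ worst P' x := by
  have h1 : worst P' a ≤ worst P a := by
    apply Finset.sup_le
    intro b hb
    have hba : b ≠ a := (Finset.mem_erase.mp hb).1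
    have hle : nrel P' b a ≤ nrel P b a := by
      apply Finset.card_le_card
      intro i hi
      simp only [Finset.mem_filter, Finset.mem_univ, true_and] at hi ⊢
      haveI := hP i
      haveI := hP' i
      rcases trichotomous_of (P i) b a with h | h | h
      · exact h
      · exact absurd h hba
      · exact absurd hi (asymm (himp₂ i b h))
    exact hle.trans (Finset.le_sup (f := fun b => nrel P b a) hb)
  intro x
  by_cases hx : x = a
  · subst hx; exact le_refl _
  have h2 : worst P x ≤ worst P' x := by
    apply Finset.sup_le
    intro b hb
    have hbx : b ≠ x := (Finset.mem_erase.mp hb).1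
    have hle : nrel P b x ≤ nrel P' b x := by
      apply Finset.card_le_card
      intro i hi
      simp only [Finset.mem_filter, Finset.mem_univ, true_and] at hi ⊢
      by_cases hba : b = a
      · subst hba; exact himp₂ i x hi
      · exact (himp₁ i b x hba hx).mp hi
    exact hle.trans (Finset.le_sup (f := fun b => nrel P' b x) hb)
  exact h1.trans ((hch x).trans h2)
end
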